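/- For every integer n ≥ 2 and every subset S ⊆ {1,…,n−1}, the generating polynomial of the statistic cro over the sequences in W_n whose dot set equals S satisfies Σ_{w ∈ W_n, Dot(w) = S} t^{cro(w)} = φ_{S,n}(t). (In particular, if S contains 1 or contains two consecutive integers, there is no w ∈ W_n with Dot(w) = S and both sides are 0.) -/

import Mathlib

open Polynomial Finset

/-- `[m]_t = 1 + t + ⋯ + t^(m-1)`, with `[0]_t = 0`. -/
noncomputable def qnum (m : ℕ) : Polynomial ℤ := ∑ i ∈ Finset.range m, X ^ i

/-- Given the previous value `prev` and a (sorted) list `s₁, …, s_ℓ`, the product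
`[s₁ - prev - 1]_t · [s₂ - s₁ - 1]_t ⋯ [s_ℓ - s_{ℓ-1} - 1]_t`. -/
noncomputable def gapProd : ℕ → List ℕ → Polynomial ℤ
  | _, [] => 1
  | prev, s :: rest => qnum (s - prev - 1) * gapProd s rest

/-- `S` contains no two consecutive integers. -/
def NoTwoConsec (S : Finset ℕ) : Prop := ∀ i ∈ S, i + 1 ∉ S

instance (S : Finset ℕ) : Decidable (NoTwoConsec S) :=
  inferInstanceAs (Decidable (∀ i ∈ S, i + 1 ∉ S))

/-- The polynomial `φ_{S,n}(t) ∈ ℤ[t]`. -/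
noncomputable def phi (n : ℕ) (S : Finset ℕ) : Polynomial ℤ :=
  if S ⊆ Finset.Icc 2 (n - 1) ∧ NoTwoConsec S then
    X ^ S.card * gapProd 0 (S.sort (· ≤ ·)) *
      (if n - 1 ∈ S then 1 else qnum (n - S.sup id))
  else 0

/-- The three symbols `•` (dot), `×` (cross), `␣` (blank). -/
inductive Mark : Type where
  | dot : Mark
  | cross : Mark
  | blank : Mark
  deriving DecidableEq

instance : Fintype Mark where
  elems := {Mark.dot, Mark.cross, Mark.blank}
  complete := fun x => by cases x <;> simp

/-- The letter `w_i` (positions numbered `1, …, m`) of a sequence encoded as a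
function `Fin m → Mark`; out-of-range positions read as blank. -/
def letterAt {m : ℕ} (w : Fin m → Mark) (i : ℕ) : Mark :=
  if h : 1 ≤ i ∧ i ≤ m then w ⟨i - 1, by omega⟩ else Mark.blank

/-- Membership in `W_n`: `w = w₁ … w_{n-1}` satisfies
(i) if `w_i = •` then `i ≥ 2` and `w_{i-1} = ×`;
(ii) a cross in position `j ≤ n-2` is immediately followed by a cross or a dot. -/
def IsW (n : ℕ) (w : Fin (n - 1) → Mark) : Prop :=
  (∀ i, letterAt w i = Mark.dot → 2 ≤ i ∧ letterAt w (i - 1) = Mark.cross) ∧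
  (∀ j, j ≤ n - 2 → letterAt w j = Mark.cross →
    letterAt w (j + 1) = Mark.cross ∨ letterAt w (j + 1) = Mark.dot)

/-- `Dot(w)`, the set of positions carrying a dot. -/
def DotSet (n : ℕ) (w : Fin (n - 1) → Mark) : Finset ℕ :=
  (Finset.Icc 1 (n - 1)).filter fun i => letterAt w i = Mark.dot

/-- `cro(w)`, the number of crosses. -/
def cro (n : ℕ) (w : Fin (n - 1) → Mark) : ℕ :=
  ((Finset.Icc 1 (n - 1)).filter fun i => letterAt w i = Mark.cross).card

/-!
Let `F_m(S)` count, by `t ^ cro`, the words of length `m` with dot set `S`, and `C_m(S)` those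
ending in a cross. Removing the last letter gives `C_{m+1}(S) = t·F_m(S)` and, since a dot must
follow a cross and a blank must follow a non-cross,
`F_{m+1}(S) − C_{m+1}(S) = [m+1 ∈ S]·C_m(S ∖ {m+1}) + F_m(S) − C_m(S)`.
So `F_m(S) = φ_{S,m+1}` and `C_m(S) = t·φ_{S,m}` follow by induction from
`φ_{S,m+2} = [m+1 ∈ S]·t·φ_{S∖{m+1},m} + (1+t)·φ_{S,m+1} − t·φ_{S,m}`.
This recursion is `[k+2]_t = (1+t)[k+1]_t − t[k]_t` once `φ` is written uniformly as
`φ_{S,n} = t^{|S|}·[s₁−1]_t⋯[s_ℓ−s_{ℓ−1}−1]_t·[n − max S]_t`, which holds for all `n` and `S`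
because every case in which `φ` vanishes produces a factor `[0]_t`.
-/

lemma qnum_zero : qnum 0 = 0 := rfl

lemma qnum_succ (k : ℕ) : qnum (k + 1) = qnum k + X ^ k :=
  Finset.sum_range_succ _ k

lemma qnum_one : qnum 1 = 1 := by simp [qnum]

lemma qnum_add_two (k : ℕ) : qnum (k + 2) = (1 + X) * qnum (k + 1) - X * qnum k := by
  rw [qnum_succ, qnum_succ]
  ring

lemma gapProd_append_singleton (p b : ℕ) :
    ∀ l : List ℕ, gapProd p (l ++ [b]) = gapProd p l * qnum (b - l.getLastD p - 1)
  | [] => by simp [gapProd]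
  | s :: l => by
    simp only [List.cons_append, gapProd, List.getLastD_cons, gapProd_append_singleton s b l]
    ring

lemma Finset.sort_insert_of_forall_lt {α : Type*} [LinearOrder α] {S : Finset α} {b : α}
    (hb : ∀ x ∈ S, x < b) : (insert b S).sort (· ≤ ·) = S.sort (· ≤ ·) ++ [b] := by
  have hbS : b ∉ S := fun h => (hb b h).false
  have hins : insert b S = (S.sort (· ≤ ·) ++ [b]).toFinset := by
    ext
    simp
  rw [hins, List.toFinset_sort]
  · simpa [List.pairwise_append] using fun x hx => (hb x hx).le
  · simp [List.nodup_append, S.sort_nodup, hbS]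

lemma getLastD_sort_eq_sup (S : Finset ℕ) : (S.sort (· ≤ ·)).getLastD 0 = S.sup id := by
  induction S using Finset.induction_on_max with
  | empty => simp
  | insert b S hb _ =>
    rw [Finset.sort_insert_of_forall_lt hb, List.getLastD_concat, Finset.sup_insert, id_eq,
      sup_of_le_left (Finset.sup_le (f := id) fun x hx => (hb x hx).le)]

lemma sup_id_mem {S : Finset ℕ} (hS : S.Nonempty) : S.sup id ∈ S := by
  simpa using Finset.sup_mem_of_nonempty (f := id) hS

noncomputable def dotWeight (S : Finset ℕ) : Polynomial ℤ :=
  X ^ S.card * gapProd 0 (S.sort (· ≤ ·))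

lemma dotWeight_insert {S : Finset ℕ} {b : ℕ} (hb : ∀ x ∈ S, x < b) :
    dotWeight (insert b S) = X * dotWeight S * qnum (b - S.sup id - 1) := by
  rw [dotWeight, dotWeight, Finset.sort_insert_of_forall_lt hb, gapProd_append_singleton,
    getLastD_sort_eq_sup, Finset.card_insert_of_notMem fun h => (hb b h).false]
  ring

lemma dotWeight_eq_zero {S : Finset ℕ} (hS : ¬((∀ s ∈ S, 2 ≤ s) ∧ NoTwoConsec S)) :
    dotWeight S = 0 := by
  induction S using Finset.induction_on_max with
  | empty => simp [NoTwoConsec] at hS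
  | insert b S hb ih =>
    rw [dotWeight_insert hb]
    by_cases hvalid : (∀ s ∈ S, 2 ≤ s) ∧ NoTwoConsec S
    · suffices b ≤ S.sup id + 1 by
        rw [Nat.sub_sub, Nat.sub_eq_zero_of_le this, qnum_zero, mul_zero]
      by_contra! hgap
      refine hS ⟨?_, fun i hi hi1 => ?_⟩
      · simpa [Finset.forall_mem_insert] using ⟨by omega, hvalid.1⟩
      rw [Finset.mem_insert] at hi hi1
      rcases hi with rfl | hi
      · rcases hi1 with h | h
        · omega
        · exact (hb _ h).not_gt (by omega)
      · have : i ≤ S.sup id := Finset.le_sup (f := id) hi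
        rcases hi1 with h | h
        · omega
        · exact hvalid.2 i hi h
    · rw [ih hvalid, mul_zero, zero_mul]

lemma phi_eq_dotWeight_mul (n : ℕ) (S : Finset ℕ) :
    phi n S = dotWeight S * qnum (n - S.sup id) := by
  rw [phi]
  split_ifs with hvalid hlast
  · have hsup : S.sup id = n - 1 :=
      le_antisymm (Finset.sup_le fun x hx => (Finset.mem_Icc.1 (hvalid.1 hx)).2)
        (Finset.le_sup (f := id) hlast)
    have := (Finset.mem_Icc.1 (hvalid.1 hlast)).1
    rw [hsup, show n - (n - 1) = 1 by omega, qnum_one, dotWeight]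
  · rfl
  · by_cases hdot : (∀ s ∈ S, 2 ≤ s) ∧ NoTwoConsec S
    · obtain ⟨s, hs, hsn⟩ : ∃ s ∈ S, n - 1 < s := by
        by_contra! h
        exact hvalid ⟨fun s hs => Finset.mem_Icc.2 ⟨hdot.1 s hs, h s hs⟩, hdot.2⟩
      have : s ≤ S.sup id := Finset.le_sup (f := id) hs
      rw [Nat.sub_eq_zero_of_le (by omega), qnum_zero, mul_zero]
    · rw [dotWeight_eq_zero hdot, zero_mul]

lemma phi_eq_zero_of_le_sup {n : ℕ} {S : Finset ℕ} (h : n ≤ S.sup id) : phi n S = 0 := by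
  rw [phi_eq_dotWeight_mul, Nat.sub_eq_zero_of_le h, qnum_zero, mul_zero]

lemma phi_zero (S : Finset ℕ) : phi 0 S = 0 :=
  phi_eq_zero_of_le_sup (Nat.zero_le _)

lemma phi_one (S : Finset ℕ) : phi 1 S = if S = ∅ then 1 else 0 := by
  by_cases hS : S = ∅ <;> simp [phi, hS, NoTwoConsec, gapProd, qnum_one]

lemma phi_add_two (m : ℕ) (S : Finset ℕ) :
    phi (m + 2) S = (if m + 1 ∈ S then X * phi m (S.erase (m + 1)) else 0)
      + (1 + X) * phi (m + 1) S - X * phi m S := by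
  rcases lt_trichotomy (S.sup id) (m + 1) with hlt | heq | hgt
  · have hS : m + 1 ∉ S := fun h => (Finset.le_sup (f := id) h).not_gt hlt
    have hle : S.sup id ≤ m := Nat.le_of_lt_succ hlt
    simp only [phi_eq_dotWeight_mul, if_neg hS, Nat.sub_add_comm hle, qnum_add_two]
    ring
  · have hS : m + 1 ∈ S :=
      heq ▸ sup_id_mem (Finset.nonempty_iff_ne_empty.2 (by rintro rfl; simp at heq))
    have hlt : ∀ x ∈ S.erase (m + 1), x < m + 1 := fun x hx =>
      lt_of_le_of_ne (heq ▸ Finset.le_sup (f := id) (Finset.mem_of_mem_erase hx))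
        (Finset.ne_of_mem_erase hx)
    have hS' : dotWeight S = X * phi m (S.erase (m + 1)) := by
      conv_lhs => rw [← Finset.insert_erase hS]
      rw [dotWeight_insert hlt, phi_eq_dotWeight_mul, Nat.sub_right_comm, Nat.add_sub_cancel,
        mul_assoc]
    rw [if_pos hS, phi_eq_dotWeight_mul, heq, show m + 2 - (m + 1) = 1 by omega, qnum_one,
      phi_eq_zero_of_le_sup (n := m + 1) heq.ge, phi_eq_zero_of_le_sup (n := m) (S := S) (by omega),
      hS']
    ring
  · have hmax := sup_id_mem (S := S) (Finset.nonempty_iff_ne_empty.2 (by rintro rfl; simp at hgt))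
    have hmax' : S.sup id ∈ S.erase (m + 1) := Finset.mem_erase.2 ⟨hgt.ne', hmax⟩
    have : S.sup id ≤ (S.erase (m + 1)).sup id := Finset.le_sup (f := id) hmax'
    rw [phi_eq_zero_of_le_sup hgt, phi_eq_zero_of_le_sup hgt.le,
      phi_eq_zero_of_le_sup (n := m) (S := S) (by omega),
      phi_eq_zero_of_le_sup (n := m) (S := S.erase (m + 1)) (by omega)]
    simp

section Words

variable {m : ℕ}

lemma mem_Icc_of_letterAt_ne_blank {w : Fin m → Mark} {i : ℕ} (h : letterAt w i ≠ .blank) :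
    1 ≤ i ∧ i ≤ m := by
  by_contra hi
  exact h (dif_neg hi)

lemma letterAt_snoc_of_le (v : Fin m → Mark) (a : Mark) {i : ℕ} (hi : i ≤ m) :
    letterAt (Fin.snoc v a : Fin (m + 1) → Mark) i = letterAt v i := by
  unfold letterAt
  split_ifs
  · exact Fin.snoc_castSucc (α := fun _ => Mark) (i := ⟨i - 1, by omega⟩) ..
  · omega
  · omega
  · rfl

lemma letterAt_snoc_succ (v : Fin m → Mark) (a : Mark) :
    letterAt (Fin.snoc v a : Fin (m + 1) → Mark) (m + 1) = a :=
  (dif_pos (by omega)).trans (Fin.snoc_last (α := fun _ => Mark) ..)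

/-- Rules (i) and (ii) of `W_n` as one condition on adjacent letters; since `letterAt w 0` is a
blank, it also excludes a dot in position `1`. -/
def Mark.CanFollow (p a : Mark) : Prop :=
  (a = .dot → p = .cross) ∧ (p = .cross → a ≠ .blank)

@[simp] lemma Mark.canFollow_dot (p : Mark) : p.CanFollow .dot ↔ p = .cross := by
  simp [Mark.CanFollow]

@[simp] lemma Mark.canFollow_cross (p : Mark) : p.CanFollow .cross := by
  simp [Mark.CanFollow]

@[simp] lemma Mark.canFollow_blank (p : Mark) : p.CanFollow .blank ↔ p ≠ .cross := by
  simp [Mark.CanFollow]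

lemma isW_iff_forall_canFollow (w : Fin m → Mark) :
    IsW (m + 1) w ↔ ∀ i < m, (letterAt w i).CanFollow (letterAt w (i + 1)) := by
  constructor
  · rintro ⟨hdot, hcross⟩ i hi
    refine ⟨fun h => by simpa using (hdot (i + 1) h).2, fun h => ?_⟩
    have := mem_Icc_of_letterAt_ne_blank (by simp [h] : letterAt w i ≠ .blank)
    rcases hcross i (by omega) h with h' | h' <;> simp [h']
  · intro h
    refine ⟨fun i hi => ?_, fun j hj hjc => ?_⟩
    · have := mem_Icc_of_letterAt_ne_blank (by simp [hi] : letterAt w i ≠ .blank)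
      have hprev := (h (i - 1) (by omega)).1
      rw [Nat.sub_add_cancel (by omega)] at hprev
      have := mem_Icc_of_letterAt_ne_blank (by simp [hprev hi] : letterAt w (i - 1) ≠ .blank)
      exact ⟨by omega, hprev hi⟩
    · have := mem_Icc_of_letterAt_ne_blank (by simp [hjc] : letterAt w j ≠ .blank)
      have hnext := (h j (by omega)).2 hjc
      revert hnext
      cases letterAt w (j + 1) <;> simp

lemma isW_snoc (v : Fin m → Mark) (a : Mark) :
    IsW (m + 1 + 1) (Fin.snoc v a : Fin (m + 1) → Mark) ↔
      IsW (m + 1) v ∧ (letterAt v m).CanFollow a := by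
  rw [isW_iff_forall_canFollow, isW_iff_forall_canFollow, Nat.forall_lt_succ_right,
    letterAt_snoc_succ, letterAt_snoc_of_le _ _ le_rfl]
  refine and_congr_left' (forall₂_congr fun i hi => ?_)
  rw [letterAt_snoc_of_le _ _ hi.le, letterAt_snoc_of_le _ _ hi]

lemma filter_letterAt_snoc (v : Fin m → Mark) (a c : Mark) :
    (Finset.Icc 1 (m + 1)).filter (fun i => letterAt (Fin.snoc v a : Fin (m + 1) → Mark) i = c) =
      if a = c then insert (m + 1) ((Finset.Icc 1 m).filter fun i => letterAt v i = c)
      else (Finset.Icc 1 m).filter fun i => letterAt v i = c := by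
  rw [← Finset.insert_Icc_right_eq_Icc_add_one (by omega), Finset.filter_insert,
    letterAt_snoc_succ,
    Finset.filter_congr fun i hi => by rw [letterAt_snoc_of_le _ _ (Finset.mem_Icc.1 hi).2]]

lemma dotSet_snoc (v : Fin m → Mark) (a : Mark) :
    DotSet (m + 1 + 1) (Fin.snoc v a : Fin (m + 1) → Mark) =
      if a = .dot then insert (m + 1) (DotSet (m + 1) v) else DotSet (m + 1) v :=
  filter_letterAt_snoc v a .dot

lemma cro_snoc (v : Fin m → Mark) (a : Mark) :
    cro (m + 1 + 1) (Fin.snoc v a : Fin (m + 1) → Mark) =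
      cro (m + 1) v + if a = .cross then 1 else 0 := by
  change ((Finset.Icc 1 (m + 1)).filter _).card = _
  rw [filter_letterAt_snoc]
  split_ifs
  · exact Finset.card_insert_of_notMem (by simp)
  · rfl

lemma Fin.sum_pi_snoc {β M : Type*} [Fintype β] [AddCommMonoid M]
    (f : (Fin (m + 1) → β) → M) : ∑ w, f w = ∑ a, ∑ v : Fin m → β, f (Fin.snoc v a) := by
  rw [← (Fin.snocEquiv fun _ => β).sum_comp, Fintype.sum_prod_type]
  rfl

lemma Mark.sum_univ {M : Type*} [AddCommMonoid M] (f : Mark → M) :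
    ∑ a, f a = f .dot + f .cross + f .blank := by
  simp [Finset.univ, Fintype.elems, add_assoc]

end Words

section GeneratingFunctions

open scoped Classical

/-- The words of `W_{m+1}` (of length `m`) with dot set `S` whose last letter satisfies `p`,
counted by `t ^ cro`. -/
noncomputable def wordGF (m : ℕ) (S : Finset ℕ) (p : Mark → Prop) : Polynomial ℤ :=
  ∑ w : Fin m → Mark with IsW (m + 1) w ∧ DotSet (m + 1) w = S ∧ p (letterAt w m),
    X ^ cro (m + 1) w

lemma wordGF_cross_add_ne_cross (m : ℕ) (S : Finset ℕ) :
    wordGF m S (· = .cross) + wordGF m S (· ≠ .cross) =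
      ∑ w ∈ Finset.univ.filter (fun w : Fin m → Mark => IsW (m + 1) w ∧ DotSet (m + 1) w = S),
        (X : Polynomial ℤ) ^ cro (m + 1) w := by
  simp only [wordGF, Finset.sum_filter, ← Finset.sum_add_distrib]
  refine Finset.sum_congr rfl fun w _ => ?_
  split_ifs <;> simp_all

lemma wordGF_zero (S : Finset ℕ) (p : Mark → Prop) :
    wordGF 0 S p = if S = ∅ ∧ p .blank then 1 else 0 := by
  rw [wordGF, Finset.sum_filter, Fintype.sum_unique (ι := Fin 0 → Mark)]
  simp [isW_iff_forall_canFollow, letterAt, cro, DotSet, eq_comm]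

lemma wordGF_succ (m : ℕ) (S : Finset ℕ) (p : Mark → Prop) :
    wordGF (m + 1) S p = ∑ a, ∑ v : Fin m → Mark,
      if IsW (m + 1) v ∧ (letterAt v m).CanFollow a ∧
          (if a = .dot then insert (m + 1) (DotSet (m + 1) v) else DotSet (m + 1) v) = S ∧ p a
        then X ^ (cro (m + 1) v + if a = .cross then 1 else 0) else 0 := by
  rw [wordGF, Finset.sum_filter]
  refine (Fin.sum_pi_snoc _).trans ?_
  simp only [isW_snoc, dotSet_snoc, cro_snoc, letterAt_snoc_succ, and_assoc]

lemma wordGF_succ_cross (m : ℕ) (S : Finset ℕ) :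
    wordGF (m + 1) S (· = .cross) =
      X * (wordGF m S (· = .cross) + wordGF m S (· ≠ .cross)) := by
  rw [wordGF_succ, Mark.sum_univ, wordGF_cross_add_ne_cross, Finset.sum_filter, Finset.mul_sum]
  simp [pow_succ']

lemma wordGF_succ_ne_cross (m : ℕ) (S : Finset ℕ) :
    wordGF (m + 1) S (· ≠ .cross) =
      (if m + 1 ∈ S then wordGF m (S.erase (m + 1)) (· = .cross) else 0) +
        wordGF m S (· ≠ .cross) := by
  have hnotMem (v : Fin m → Mark) : m + 1 ∉ DotSet (m + 1) v := by simp [DotSet]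
  rw [wordGF_succ, Mark.sum_univ]
  simp only [wordGF, Finset.sum_filter, Mark.canFollow_dot, Mark.canFollow_cross,
    Mark.canFollow_blank, ↓reduceIte, ne_eq, reduceCtorEq, not_false_eq_true, not_true_eq_false,
    and_true, and_false, add_zero, Finset.sum_const_zero, Nat.add_one_sub_one]
  congr 1
  · split_ifs with hS
    · refine Finset.sum_congr rfl fun v _ => if_congr ?_ rfl rfl
      rw [@eq_comm _ (DotSet (m + 1) v), Finset.erase_eq_iff_eq_insert hS (hnotMem v),
        @eq_comm _ S]
      tauto
    · refine Finset.sum_eq_zero fun v _ => if_neg fun h => hS ?_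
      exact h.2.2 ▸ Finset.mem_insert_self _ _
  · exact Finset.sum_congr rfl fun v _ => if_congr (by tauto) rfl rfl

lemma wordGF_eq_phi (m : ℕ) (S : Finset ℕ) :
    wordGF m S (· = .cross) = X * phi m S ∧
      wordGF m S (· ≠ .cross) = phi (m + 1) S - X * phi m S := by
  induction m generalizing S with
  | zero => simp [wordGF_zero, phi_zero, phi_one]
  | succ m ih =>
    constructor
    · rw [wordGF_succ_cross, (ih S).1, (ih S).2]
      ring
    · rw [wordGF_succ_ne_cross, phi_add_two, (ih S).2]
      split_ifs
      · rw [(ih _).1]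
        ring
      · ring

end GeneratingFunctions

open scoped Classical in
theorem W_genfun_eq_phi_general (n : ℕ) (hn : 2 ≤ n) (S : Finset ℕ) :
    ∑ w ∈ Finset.univ.filter (fun w : Fin (n - 1) → Mark => IsW n w ∧ DotSet n w = S),
      (X : Polynomial ℤ) ^ cro n w = phi n S := by
  obtain ⟨m, rfl⟩ : ∃ m, n = m + 1 := ⟨n - 1, by omega⟩
  refine (wordGF_cross_add_ne_cross m S).symm.trans ?_
  rw [(wordGF_eq_phi m S).1, (wordGF_eq_phi m S).2]
  ring

open scoped Classical in
/-- For `n ≥ 2` and `S ⊆ [1, n-1]`: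
`∑_{w ∈ W_n, Dot(w) = S} t^{cro(w)} = φ_{S,n}(t)`. -/
theorem W_genfun_eq_phi (n : ℕ) (hn : 2 ≤ n) (S : Finset ℕ)
    (hS : S ⊆ Finset.Icc 1 (n - 1)) :
    ∑ w ∈ Finset.univ.filter (fun w : Fin (n - 1) → Mark => IsW n w ∧ DotSet n w = S),
      (X : Polynomial ℤ) ^ cro n w = phi n S :=
  W_genfun_eq_phi_general n hn S
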